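/- Fix z ∈ ℍ. As t → 0⁺, Θ_t(z) = 1/t − 1 + O(e^{-c/t}) for some c > 0 depending on z; and as t → ∞, Θ_t(z) = O(e^{-c't}) for some c' > 0. -/

import Mathlib

/-!
With `Q(m, n) = |mz + n|² / y`, the full lattice sum `Σ_{ℤ²} exp(-πtQ)` equals `Θ_t + 1`.
Poisson summation in `n` (for fixed `m`) and then in `m` turns this sum at `t` into `t⁻¹`
times the same sum at `1/t`, i.e. `Θ_t - (1/t - 1) = t⁻¹ Θ_{1/t}`. Since
`Q ≥ c := y / (x² + y² + 1)` on `ℤ² \ {0}`, for `t ≥ 1` each term satisfies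
`exp(-πtQ) ≤ e^{-πc(t-1)} exp(-πQ)`, so `Θ_t = O(e^{-πct})`; the inversion formula carries this
to `t → 0⁺`, where the extra factor `1/t` is absorbed by halving the exponent.
-/

open Real Set Filter Asymptotics

/-- The theta series `Θ_t(z) = Σ_{(m,n)∈ℤ²\{0}} exp(-πt|mz+n|²/y)`. -/
noncomputable def Theta (t x y : ℝ) : ℝ :=
  ∑' p : ℤ × ℤ, if p = 0 then 0 else
    Real.exp (-Real.pi * t * (((p.1 : ℝ) * x + (p.2 : ℝ)) ^ 2 + (p.1 : ℝ) ^ 2 * y ^ 2) / y)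

theorem summable_exp_neg_mul_int_sq {a : ℝ} (ha : 0 < a) :
    Summable fun n : ℤ => rexp (-π * a * n ^ 2) := by
  simpa [mul_assoc] using summable_pow_mul_jacobiTheta₂_term_bound 0 ha 0

theorem tsum_exp_neg_mul_int_add_sq {a : ℝ} (ha : 0 < a) (v : ℝ) :
    ∑' n : ℤ, rexp (-π * a * (n + v) ^ 2) =
      (√a)⁻¹ * ∑' n : ℤ, rexp (-π / a * n ^ 2) * cos (2 * π * v * n) := by
  set E := Complex.exp (π * a * v ^ 2)
  have hL : ∀ n : ℤ, Complex.exp (-π * a * n ^ 2 + 2 * π * (-(a : ℂ) * v) * n) =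
      E * (rexp (-π * a * (n + v) ^ 2) : ℂ) := by
    intro n
    push_cast
    rw [← Complex.exp_add]
    ring_nf
  have hR : ∀ n : ℤ, Complex.exp (-π / a * (n + Complex.I * (-(a : ℂ) * v)) ^ 2) =
      E * Complex.exp ((-π / a * n ^ 2 : ℝ) + (2 * π * v * n : ℝ) * Complex.I) := by
    intro n
    have ha' : (a : ℂ) ≠ 0 := by exact_mod_cast ha.ne'
    push_cast
    rw [← Complex.exp_add]
    congr 1
    field_simp
    ring_nf
    rw [Complex.I_sq]
    ring
  have hsqrt : (a : ℂ) ^ (1 / 2 : ℂ) = (√a : ℝ) := by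
    rw [Real.sqrt_eq_rpow, Complex.ofReal_cpow ha.le]
    norm_num
  have key := Complex.tsum_exp_neg_quadratic (a := a) (by simpa using ha) (-(a : ℂ) * v)
  -- Mathlib's Poisson formula with `b = -a v`: both sides carry the factor `E`.
  simp_rw [hL, hR, tsum_mul_left, hsqrt, mul_left_comm _ E] at key
  have hsum : Summable fun n : ℤ =>
      Complex.exp ((-π / a * n ^ 2 : ℝ) + (2 * π * v * n : ℝ) * Complex.I) := by
    refine .of_norm_bounded (summable_exp_neg_mul_int_sq (inv_pos.2 ha)) fun n => ?_
    rw [Complex.exp_add, ← Complex.ofReal_exp, norm_mul, Complex.norm_exp_ofReal_mul_I, mul_one,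
      Complex.norm_real, Real.norm_of_nonneg (exp_pos _).le, div_eq_mul_inv]
  have := congrArg Complex.re (mul_left_cancel₀ (Complex.exp_ne_zero _) key)
  rw [← Complex.ofReal_tsum, Complex.ofReal_re, one_div, ← Complex.ofReal_inv,
    Complex.re_ofReal_mul, Complex.re_tsum hsum] at this
  rw [this]
  congr 2 with n
  rw [Complex.exp_add, ← Complex.ofReal_exp, Complex.re_ofReal_mul, Complex.exp_ofReal_mul_I_re]

theorem tsum_exp_neg_mul_int_sq_mul_cos {a : ℝ} (ha : 0 < a) (v : ℝ) :
    ∑' n : ℤ, rexp (-π * a * n ^ 2) * cos (2 * π * v * n) =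
      (√a)⁻¹ * ∑' n : ℤ, rexp (-π / a * (n + v) ^ 2) := by
  rw [div_eq_mul_inv, tsum_exp_neg_mul_int_add_sq (inv_pos.2 ha), sqrt_inv, inv_inv, div_inv_eq_mul,
    inv_mul_cancel_left₀ (sqrt_pos.2 ha).ne']

/-- `Q(m, n) = |mz + n|² / y` for `z = x + iy`. -/
noncomputable def quadForm (x y : ℝ) (p : ℤ × ℤ) : ℝ :=
  (((p.1 : ℝ) * x + p.2) ^ 2 + (p.1 : ℝ) ^ 2 * y ^ 2) / y

theorem Theta_eq_tsum (t x y : ℝ) :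
    Theta t x y = ∑' p : ℤ × ℤ, if p = 0 then 0 else rexp (-π * t * quadForm x y p) := by
  simp only [Theta, quadForm, mul_div_assoc]

section quadForm

variable {x y : ℝ}

theorem mul_sq_add_sq_le_quadForm (hy : 0 < y) (p : ℤ × ℤ) :
    y / (x ^ 2 + y ^ 2 + 1) * ((p.1 : ℝ) ^ 2 + (p.2 : ℝ) ^ 2) ≤ quadForm x y p := by
  rw [quadForm, div_mul_eq_mul_div, div_le_div_iff₀ (by positivity) hy]
  nlinarith [sq_nonneg ((p.1 * x + p.2) * x + p.1 * y ^ 2), sq_nonneg ((p.1 : ℝ) * x + p.2)]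

theorem one_le_sq_add_sq_of_ne_zero {p : ℤ × ℤ} (hp : p ≠ 0) :
    (1 : ℝ) ≤ (p.1 : ℝ) ^ 2 + (p.2 : ℝ) ^ 2 := by
  have : p.1 ≠ 0 ∨ p.2 ≠ 0 := by
    by_contra! h
    exact hp (Prod.ext h.1 h.2)
  norm_cast
  rcases this with h | h
  · nlinarith [sq_nonneg p.2, Int.one_le_abs h, sq_abs p.1]
  · nlinarith [sq_nonneg p.1, Int.one_le_abs h, sq_abs p.2]

theorem le_quadForm_of_ne_zero (hy : 0 < y) {p : ℤ × ℤ} (hp : p ≠ 0) :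
    y / (x ^ 2 + y ^ 2 + 1) ≤ quadForm x y p :=
  (le_mul_of_one_le_right (by positivity) (one_le_sq_add_sq_of_ne_zero hp)).trans
    (mul_sq_add_sq_le_quadForm hy p)

theorem summable_exp_neg_quadForm (hy : 0 < y) {t : ℝ} (ht : 0 < t) :
    Summable fun p => rexp (-π * t * quadForm x y p) := by
  have hc : 0 < t * (y / (x ^ 2 + y ^ 2 + 1)) := by positivity
  refine ((summable_exp_neg_mul_int_sq hc).mul_of_nonneg (summable_exp_neg_mul_int_sq hc)
    (fun _ => (exp_pos _).le) (fun _ => (exp_pos _).le)).of_nonneg_of_le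
    (fun _ => (exp_pos _).le) fun p => ?_
  rw [← exp_add, exp_le_exp]
  have h := mul_le_mul_of_nonneg_left (mul_sq_add_sq_le_quadForm (x := x) hy p)
    (by positivity : 0 ≤ π * t)
  linarith

theorem exp_neg_quadForm_eq_mul (hy : y ≠ 0) (t : ℝ) (m n : ℤ) :
    rexp (-π * t * quadForm x y (m, n)) =
      rexp (-π * (t * y) * m ^ 2) * rexp (-π * (t / y) * (n + m * x) ^ 2) := by
  rw [← exp_add, quadForm]
  congr 1
  field_simp
  ring

end quadForm

theorem tsum_exp_neg_quadForm_inv {x y t : ℝ} (hy : 0 < y) (ht : 0 < t) :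
    ∑' p, rexp (-π * t * quadForm x y p) =
      t⁻¹ * ∑' p, rexp (-π * t⁻¹ * quadForm x y p) := by
  have hA : 0 < t / y := div_pos ht hy
  have hB : 0 < t * y := mul_pos ht hy
  set g : ℤ → ℤ → ℝ := fun m n =>
    rexp (-π * (t * y) * m ^ 2) * (rexp (-π / (t / y) * n ^ 2) * cos (2 * π * (m * x) * n))
  have hg : Summable (Function.uncurry g) := by
    refine ((summable_exp_neg_mul_int_sq hB).mul_of_nonneg
      ((summable_exp_neg_mul_int_sq (inv_pos.2 hA)).congr fun n => by rw [div_eq_mul_inv])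
      (fun _ => (exp_pos _).le) (fun _ => (exp_pos _).le)).of_norm_bounded fun p => ?_
    simp only [Function.uncurry, g, norm_mul, norm_of_nonneg (exp_pos _).le]
    exact mul_le_mul_of_nonneg_left (mul_le_of_le_one_right (exp_pos _).le (abs_cos_le_one _))
      (exp_pos _).le
  have hinv : ∀ n m : ℤ, rexp (-π / (t / y) * n ^ 2) * rexp (-π / (t * y) * (m + n * x) ^ 2) =
      rexp (-π * t⁻¹ * quadForm x y (n, m)) := by
    intro n m
    rw [exp_neg_quadForm_eq_mul hy.ne']
    congr 2 <;> field_simp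
  calc ∑' p, rexp (-π * t * quadForm x y p)
      = ∑' m : ℤ, ∑' n : ℤ, rexp (-π * t * quadForm x y (m, n)) :=
        (summable_exp_neg_quadForm hy ht).tsum_prod
    _ = ∑' m : ℤ, (√(t / y))⁻¹ * ∑' n : ℤ, g m n := by
        refine tsum_congr fun m => ?_
        simp only [exp_neg_quadForm_eq_mul hy.ne', g, tsum_mul_left, tsum_exp_neg_mul_int_add_sq hA]
        ring
    _ = (√(t / y))⁻¹ * ∑' n : ℤ, rexp (-π / (t / y) * n ^ 2) *
          ((√(t * y))⁻¹ * ∑' m : ℤ, rexp (-π / (t * y) * (m + n * x) ^ 2)) := by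
        rw [tsum_mul_left, ← hg.tsum_comm]
        congr 1
        refine tsum_congr fun n => ?_
        rw [← tsum_exp_neg_mul_int_sq_mul_cos hB, ← tsum_mul_left]
        refine tsum_congr fun m => ?_
        simp only [g]
        ring_nf
    _ = (√(t / y) * √(t * y))⁻¹ *
          ∑' n : ℤ, ∑' m : ℤ, rexp (-π * t⁻¹ * quadForm x y (n, m)) := by
        simp_rw [← hinv, mul_inv, mul_assoc, ← tsum_mul_left]
        refine tsum_congr fun n => tsum_congr fun m => ?_
        ring
    _ = t⁻¹ * ∑' p, rexp (-π * t⁻¹ * quadForm x y p) := by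
        rw [← sqrt_mul hA.le, show t / y * (t * y) = t ^ 2 by field_simp, sqrt_sq ht.le,
          (summable_exp_neg_quadForm hy (inv_pos.2 ht)).tsum_prod]

section Theta

variable {x y : ℝ}

theorem Theta_eq_tsum_sub_one (hy : 0 < y) {t : ℝ} (ht : 0 < t) :
    Theta t x y = ∑' p, rexp (-π * t * quadForm x y p) - 1 := by
  rw [(summable_exp_neg_quadForm hy ht).tsum_eq_add_tsum_ite 0, Theta_eq_tsum]
  simp [quadForm]

theorem Theta_sub_eq (hy : 0 < y) {t : ℝ} (ht : 0 < t) :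
    Theta t x y - (1 / t - 1) = t⁻¹ * Theta t⁻¹ x y := by
  rw [Theta_eq_tsum_sub_one hy ht, Theta_eq_tsum_sub_one hy (inv_pos.2 ht),
    tsum_exp_neg_quadForm_inv hy ht]
  ring

theorem summable_Theta_terms (hy : 0 < y) {t : ℝ} (ht : 0 < t) :
    Summable fun p : ℤ × ℤ => if p = 0 then 0 else rexp (-π * t * quadForm x y p) :=
  ((summable_exp_neg_quadForm hy ht).update 0 0).congr fun p => by rw [Function.update_apply]

theorem Theta_nonneg (t : ℝ) : 0 ≤ Theta t x y := by
  rw [Theta_eq_tsum]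
  exact tsum_nonneg fun p => by split_ifs <;> positivity

theorem Theta_le_exp_mul_Theta_one (hy : 0 < y) {t : ℝ} (ht : 1 ≤ t) :
    Theta t x y ≤ rexp (-(π * (y / (x ^ 2 + y ^ 2 + 1))) * (t - 1)) * Theta 1 x y := by
  rw [Theta_eq_tsum, Theta_eq_tsum, ← tsum_mul_left]
  refine Summable.tsum_le_tsum (fun p => ?_) (summable_Theta_terms hy (by linarith))
    ((summable_Theta_terms hy one_pos).mul_left _)
  split_ifs with hp
  · simp
  rw [← exp_add, exp_le_exp]
  have h := mul_le_mul_of_nonneg_left (le_quadForm_of_ne_zero (x := x) hy hp)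
    (by nlinarith [pi_pos] : 0 ≤ π * (t - 1))
  linarith

theorem Theta_isBigO_atTop (hy : 0 < y) :
    (Theta · x y) =O[atTop] fun t => rexp (-(π * (y / (x ^ 2 + y ^ 2 + 1))) * t) := by
  set c := π * (y / (x ^ 2 + y ^ 2 + 1))
  refine .of_bound (rexp c * Theta 1 x y) ?_
  filter_upwards [eventually_ge_atTop 1] with t ht
  rw [norm_of_nonneg (Theta_nonneg _), norm_of_nonneg (exp_pos _).le]
  calc Theta t x y ≤ rexp (-c * (t - 1)) * Theta 1 x y := Theta_le_exp_mul_Theta_one hy ht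
    _ = rexp c * Theta 1 x y * rexp (-c * t) := by
      rw [mul_right_comm, ← exp_add]
      ring_nf

end Theta

/-- For fixed `z ∈ ℍ`: as `t → 0⁺`, `Θ_t(z) = 1/t − 1 + O(e^{-c/t})` for some `c > 0`,
and as `t → ∞`, `Θ_t(z) = O(e^{-c't})` for some `c' > 0`. -/
theorem Theta_asymptotics (x y : ℝ) (hy : 0 < y) :
    (∃ c : ℝ, 0 < c ∧
      (fun t : ℝ => Theta t x y - (1 / t - 1))
        =O[nhdsWithin 0 (Ioi 0)] fun t : ℝ => Real.exp (-c / t)) ∧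
    (∃ c' : ℝ, 0 < c' ∧
      (fun t : ℝ => Theta t x y) =O[atTop] fun t : ℝ => Real.exp (-c' * t)) := by
  set c := π * (y / (x ^ 2 + y ^ 2 + 1))
  have hc : 0 < c := by positivity
  have hlarge : (Theta · x y) =O[atTop] fun t => rexp (-c * t) := Theta_isBigO_atTop hy
  refine ⟨⟨c / 2, by positivity, ?_⟩, ⟨c, hc, hlarge⟩⟩
  have hmul : (fun s => s * Theta s x y) =O[atTop] fun s => rexp (-(c / 2) * s) := by
    refine ((isLittleO_pow_exp_pos_mul_atTop 1 (half_pos hc)).isBigO.mul hlarge).congr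
      (fun s => by rw [pow_one]) fun s => ?_
    rw [← exp_add]
    ring_nf
  refine (hmul.comp_tendsto tendsto_inv_nhdsGT_zero).congr' ?_ ?_
  · filter_upwards [self_mem_nhdsWithin] with t ht
    exact (Theta_sub_eq hy ht).symm
  · exact .of_forall fun t => by simp only [Function.comp_apply, div_eq_mul_inv]
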